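/- arXiv:cs/0405043 — 9 statements merged into one kernel-verified Lean document; each statement's English description precedes it below -/
import Mathlib

section
/- Let q^1,...,q^n be independent exponentially distributed random variables with P[q^i ≥ a] = e^{-a} for a ≥ 0, and let k^1,...,k^n be real numbers with u := Σ_{i=1}^n e^{-k^i} < ∞. Then E[max_i (q^i - k^i)] ≤ 1 + ln u. -/
/-!
Each `qⁱ - kⁱ` exceeds `c` with probability at most `e^{-kⁱ} e^{-c}`, so by the union bound the
maximum `M` satisfies `P[M > log u + t] ≤ e^{-t}` for `t > 0`. Integrating this tail bound gives
`E[(M - log u)⁺] ≤ ∫₀^∞ e^{-t} dt = 1`, hence `E[M] ≤ log u + 1`. The same union bound shows that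
the family is almost surely bounded above (in `ℝ`, `⨆` of an unbounded family is the junk value
`0`), so `M ≥ qⁱ - kⁱ ≥ -kⁱ` a.s. for any fixed `i`, which makes `M` integrable.
-/

open MeasureTheory Filter Set Real Topology

section

variable {Ω ι : Type*} [MeasurableSpace Ω] {μ : Measure Ω}

lemma measure_lt_le_ofReal_exp_neg [IsZeroOrProbabilityMeasure μ] {X : Ω → ℝ}
    (htail : ∀ a, 0 ≤ a → μ {ω | a ≤ X ω} ≤ ENNReal.ofReal (exp (-a))) (a : ℝ) :
    μ {ω | a < X ω} ≤ ENNReal.ofReal (exp (-a)) := by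
  rcases le_or_gt 0 a with ha | ha
  · exact (measure_mono fun ω (hω : a < X ω) => hω.le).trans (htail a ha)
  · refine prob_le_one.trans ?_
    rw [ENNReal.one_le_ofReal]
    exact one_le_exp (by linarith)

lemma measure_iUnion_lt_sub_le [Countable ι] [IsZeroOrProbabilityMeasure μ] {q : ι → Ω → ℝ}
    (htail : ∀ i a, 0 ≤ a → μ {ω | a ≤ q i ω} ≤ ENNReal.ofReal (exp (-a)))
    {k : ι → ℝ} (hsum : Summable fun i => exp (-k i)) (c : ℝ) :
    μ (⋃ i, {ω | c < q i ω - k i}) ≤ ENNReal.ofReal (exp (-c) * ∑' i, exp (-k i)) := by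
  have hexp : ∀ i, exp (-(c + k i)) = exp (-c) * exp (-k i) := fun i => by
    rw [← exp_add, neg_add]
  calc μ (⋃ i, {ω | c < q i ω - k i})
      ≤ ∑' i, μ {ω | c + k i < q i ω} := by
        refine (measure_iUnion_le _).trans (ENNReal.tsum_le_tsum fun i => measure_mono ?_)
        exact fun ω (hω : c < q i ω - k i) => show c + k i < q i ω by linarith
    _ ≤ ∑' i, ENNReal.ofReal (exp (-c) * exp (-k i)) :=
        ENNReal.tsum_le_tsum fun i => (hexp i ▸ measure_lt_le_ofReal_exp_neg (htail i) _)
    _ = ENNReal.ofReal (exp (-c) * ∑' i, exp (-k i)) := by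
        rw [← ENNReal.ofReal_tsum_of_nonneg (fun i => by positivity) (hsum.mul_left _),
          tsum_mul_left]

lemma ae_bddAbove_range_of_measure_iUnion_le {f : ι → Ω → ℝ} {B : ℝ → ENNReal}
    (hB : Tendsto B atTop (𝓝 0)) (h : ∀ c, μ (⋃ i, {ω | c < f i ω}) ≤ B c) :
    ∀ᵐ ω ∂μ, BddAbove (range fun i => f i ω) := by
  refine ae_iff.2 (le_antisymm (ge_of_tendsto' hB fun c => ?_) zero_le)
  refine (measure_mono fun ω hω => ?_).trans (h c)
  obtain ⟨_, ⟨i, rfl⟩, hi⟩ := not_bddAbove_iff.1 hω c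
  exact mem_iUnion.2 ⟨i, hi⟩

lemma lintegral_ofReal_sub_le_one {X : Ω → ℝ} {L : ℝ} (hX : AEMeasurable X μ)
    (htail : ∀ t, 0 < t → μ {ω | L + t < X ω} ≤ ENNReal.ofReal (exp (-t))) :
    ∫⁻ ω, ENNReal.ofReal (X ω - L) ∂μ ≤ 1 := by
  have hpos : ∀ ω, ENNReal.ofReal (X ω - L) = ENNReal.ofReal (max (X ω - L) 0) := fun ω => by
    rw [ENNReal.ofReal_max, ENNReal.ofReal_zero, max_eq_left zero_le]
  simp_rw [hpos]
  have hexp : IntegrableOn (fun t : ℝ => exp (-t)) (Ioi 0) := by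
    simpa using exp_neg_integrableOn_Ioi 0 one_pos
  rw [lintegral_eq_lintegral_meas_lt μ (f := fun ω => max (X ω - L) 0)
    (ae_of_all _ fun ω => le_max_right _ _) (by fun_prop)]
  calc ∫⁻ t in Ioi 0, μ {ω | t < max (X ω - L) 0}
      ≤ ∫⁻ t in Ioi 0, ENNReal.ofReal (exp (-t)) := by
        refine setLIntegral_mono' measurableSet_Ioi fun t (ht : 0 < t) => ?_
        refine (measure_mono fun ω (hω : t < max (X ω - L) 0) => ?_).trans (htail t ht)
        exact (show L + t < X ω by rw [lt_max_iff] at hω; rcases hω with h | h <;> linarith)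
    _ = ENNReal.ofReal (∫ t in Ioi 0, exp (-t)) :=
        (ofReal_integral_eq_lintegral_ofReal hexp (ae_of_all _ fun t => (exp_pos _).le)).symm
    _ = 1 := by rw [integral_exp_neg_Ioi_zero, ENNReal.ofReal_one]

lemma integral_le_add_one_of_measure_lt_le [IsProbabilityMeasure μ] {X : Ω → ℝ} {b L : ℝ}
    (hX : AEMeasurable X μ) (hb : ∀ᵐ ω ∂μ, b ≤ X ω)
    (htail : ∀ t, 0 < t → μ {ω | L + t < X ω} ≤ ENNReal.ofReal (exp (-t))) :
    ∫ ω, X ω ∂μ ≤ L + 1 := by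
  set Y := fun ω => (ENNReal.ofReal (X ω - L)).toReal
  have hlint := lintegral_ofReal_sub_le_one hX htail
  have hYmeas : AEMeasurable (fun ω => ENNReal.ofReal (X ω - L)) μ :=
    (hX.sub_const L).ennreal_ofReal
  have hY : Integrable Y μ :=
    integrable_toReal_of_lintegral_ne_top hYmeas (ne_top_of_le_ne_top ENNReal.one_ne_top hlint)
  have hXY : ∀ ω, X ω ≤ L + Y ω := fun ω => by
    simp only [Y, ENNReal.toReal_ofReal']
    linarith [le_max_left (X ω - L) 0]
  have hXint : Integrable X μ := integrable_of_le_of_le hX.aestronglyMeasurable hb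
    (ae_of_all _ hXY) (integrable_const b) ((integrable_const L).add hY)
  calc ∫ ω, X ω ∂μ ≤ ∫ ω, (L + Y ω) ∂μ := integral_mono hXint ((integrable_const L).add hY) hXY
    _ = L + (∫⁻ ω, ENNReal.ofReal (X ω - L) ∂μ).toReal := by
        rw [integral_add (integrable_const L) hY, integral_const, integral_toReal hYmeas
          (ae_of_all _ fun _ => ENNReal.ofReal_lt_top)]
        simp
    _ ≤ L + 1 := by
        gcongr
        exact ENNReal.toReal_le_of_le_ofReal zero_le_one (by rwa [ENNReal.ofReal_one])

end

theorem expected_max_shifted_exponentials_general {Ω : Type*} [MeasurableSpace Ω]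
    (μ : Measure Ω) [IsProbabilityMeasure μ] {ι : Type*} [Countable ι] [Nonempty ι]
    (q : ι → Ω → ℝ) (hmeas : ∀ i, Measurable (q i))
    (htail : ∀ i, ∀ a : ℝ, 0 ≤ a → μ {ω | a ≤ q i ω} = ENNReal.ofReal (Real.exp (-a)))
    (k : ι → ℝ) (hsum : Summable fun i => Real.exp (-k i)) :
    ∫ ω, (⨆ i, (q i ω - k i)) ∂μ ≤ 1 + Real.log (∑' i, Real.exp (-k i)) := by
  obtain ⟨i₀⟩ := ‹Nonempty ι›
  set u := ∑' i, exp (-k i)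
  have hu : 0 < u := hsum.tsum_pos (fun i => (exp_pos _).le) i₀ (exp_pos _)
  have hunion : ∀ c, μ (⋃ i, {ω | c < q i ω - k i}) ≤ ENNReal.ofReal (exp (-c) * u) :=
    measure_iUnion_lt_sub_le (fun i a ha => (htail i a ha).le) hsum
  have hbdd : ∀ᵐ ω ∂μ, BddAbove (range fun i => q i ω - k i) :=
    ae_bddAbove_range_of_measure_iUnion_le (by
      simpa using (ENNReal.tendsto_ofReal (tendsto_exp_neg_atTop_nhds_zero.mul_const u))) hunion
  have hq₀ : ∀ᵐ ω ∂μ, 0 ≤ q i₀ ω :=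
    (ae_iff_measure_eq (measurableSet_le measurable_const (hmeas i₀)).nullMeasurableSet).2
      (by simpa using htail i₀ 0 le_rfl)
  rw [add_comm]
  refine integral_le_add_one_of_measure_lt_le (b := -k i₀)
    (Measurable.iSup fun i => (hmeas i).sub measurable_const).aemeasurable ?_ fun t _ => ?_
  · filter_upwards [hbdd, hq₀] with ω hω h₀
    linarith [le_ciSup hω i₀]
  · have hsub : {ω | log u + t < ⨆ i, (q i ω - k i)} ⊆ ⋃ i, {ω | log u + t < q i ω - k i} :=
      fun ω (hω : log u + t < ⨆ i, (q i ω - k i)) => mem_iUnion.2 (exists_lt_of_lt_ciSup hω)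
    refine (measure_mono hsub).trans ((hunion _).trans_eq ?_)
    rw [neg_add, exp_add, exp_neg (log u), exp_log hu, mul_right_comm, inv_mul_cancel₀ hu.ne',
      one_mul]

/-- Maximum of shifted exponential distributions:
E[sup_i (qⁱ - kⁱ)] ≤ 1 + ln u where u = Σ_i e^{-kⁱ}. -/
theorem expected_max_shifted_exponentials {Ω : Type*} [MeasurableSpace Ω]
    (μ : Measure Ω) [IsProbabilityMeasure μ] {ι : Type*} [Countable ι] [Nonempty ι]
    (q : ι → Ω → ℝ) (hmeas : ∀ i, Measurable (q i))
    (hindep : ProbabilityTheory.iIndepFun q μ)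
    (htail : ∀ i, ∀ a : ℝ, 0 ≤ a → μ {ω | a ≤ q i ω} = ENNReal.ofReal (Real.exp (-a)))
    (htail' : ∀ i, ∀ a : ℝ, a < 0 → μ {ω | a ≤ q i ω} = 1)
    (k : ι → ℝ) (hsum : Summable fun i => Real.exp (-k i)) :
    ∫ ω, (⨆ i, (q i ω - k i)) ∂μ ≤ 1 + Real.log (∑' i, Real.exp (-k i)) :=
  expected_max_shifted_exponentials_general μ q hmeas htail k hsum
end

section
/- Let D ⊆ ℝ^n, s_t ∈ ℝ^n for 1 ≤ t ≤ T, q, k ∈ ℝ^n, and ε_t > 0 decreasing in t, with all required minima/maxima attained. Then Σ_{t=1}^T M(s_{1:t} + (k−q)/ε_t)·s_t ≤ min_{d∈D} d·(s_{1:T} + k/ε_T) + (1/ε_T) max_{d∈D} d·(q−k) − (1/ε_T) M(s_{1:T} + k/ε_T)·q. -/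
/-- IFPL bounded by best decision in hindsight (Theorem 2 of Hutter-Poland). -/
theorem ifpl_bounded_by_beh (n T : ℕ) (hT : 1 ≤ T) (D : Set (Fin n → ℝ))
    (s : ℕ → Fin n → ℝ) (q k : Fin n → ℝ) (ε : ℕ → ℝ)
    (hεpos : ∀ t, 1 ≤ t → t ≤ T → 0 < ε t)
    (hεdec : ∀ t₁ t₂, 1 ≤ t₁ → t₁ ≤ t₂ → t₂ ≤ T → ε t₂ ≤ ε t₁)
    -- the IFPL minimizers at each time t
    (M : ℕ → Fin n → ℝ)
    (hM : ∀ t ∈ Finset.Icc 1 T, M t ∈ D ∧ ∀ d ∈ D,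
      ∑ i, M t i * ((∑ u ∈ Finset.Icc 1 t, s u) i + (k i - q i) / ε t) ≤
        ∑ i, d i * ((∑ u ∈ Finset.Icc 1 t, s u) i + (k i - q i) / ε t))
    -- the best decision in hindsight w.r.t. s_{1:T} + k/ε_T
    (B : Fin n → ℝ)
    (hB : B ∈ D ∧ ∀ d ∈ D,
      ∑ i, B i * ((∑ u ∈ Finset.Icc 1 T, s u) i + k i / ε T) ≤
        ∑ i, d i * ((∑ u ∈ Finset.Icc 1 T, s u) i + k i / ε T))
    -- the maximizer of d·(q-k) over D
    (C : Fin n → ℝ)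
    (hC : C ∈ D ∧ ∀ d ∈ D, ∑ i, d i * (q i - k i) ≤ ∑ i, C i * (q i - k i)) :
    ∑ t ∈ Finset.Icc 1 T, ∑ i, M t i * s t i ≤
      (∑ i, B i * ((∑ u ∈ Finset.Icc 1 T, s u) i + k i / ε T)) +
        (1 / ε T) * (∑ i, C i * (q i - k i)) -
        (1 / ε T) * ∑ i, B i * q i := by
  obtain ⟨hB1, hB2⟩ := hB
  obtain ⟨hC1, hC2⟩ := hC
  set r : ℕ → ℝ := fun t => if t = 0 then 0 else (ε t)⁻¹ with hrdef
  have hr_eq : ∀ t, 1 ≤ t → ∀ x : ℝ, x / ε t = x * r t := by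
    intro t ht x
    simp [hrdef, Nat.one_le_iff_ne_zero.mp ht, div_eq_mul_inv]
  have hM' : ∀ t ∈ Finset.Icc 1 T, ∀ d ∈ D,
      ∑ i, M t i * ((∑ u ∈ Finset.Icc 1 t, s u) i + (k i - q i) * r t) ≤
        ∑ i, d i * ((∑ u ∈ Finset.Icc 1 t, s u) i + (k i - q i) * r t) := by
    intro t ht d hd
    have h1 : 1 ≤ t := (Finset.mem_Icc.mp ht).1
    have := (hM t ht).2 d hd
    simpa [hr_eq t h1] using this
  -- key induction (be-the-leader)
  have key : ∀ t, 1 ≤ t → t ≤ T →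
      ∑ u ∈ Finset.Icc 1 t, ∑ i, M u i * (s u i + (k i - q i) * (r u - r (u - 1))) ≤
      ∑ i, M t i * ((∑ u ∈ Finset.Icc 1 t, s u) i + (k i - q i) * r t) := by
    intro t ht1
    induction t, ht1 using Nat.le_induction with
    | base =>
      intro _
      simp [hrdef, Finset.sum_apply]
    | succ t ht ih =>
      intro htT
      have htT' : t ≤ T := le_trans (Nat.le_succ t) htT
      have hmem : t ∈ Finset.Icc 1 T := Finset.mem_Icc.mpr ⟨ht, htT'⟩
      have hmem' : t + 1 ∈ Finset.Icc 1 T := Finset.mem_Icc.mpr ⟨Nat.le_succ_of_le ht, htT⟩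
      rw [Finset.sum_Icc_succ_top (Nat.le_succ_of_le ht)]
      have h1 := ih htT'
      have h2 := hM' t hmem (M (t + 1)) (hM (t + 1) hmem').1
      have h3 : ∑ i, M (t + 1) i * ((∑ u ∈ Finset.Icc 1 t, s u) i + (k i - q i) * r t)
          + ∑ i, M (t + 1) i * (s (t + 1) i + (k i - q i) * (r (t + 1) - r (t + 1 - 1)))
          = ∑ i, M (t + 1) i * ((∑ u ∈ Finset.Icc 1 (t + 1), s u) i + (k i - q i) * r (t + 1)) := by
        rw [← Finset.sum_add_distrib]
        refine Finset.sum_congr rfl (fun i _ => ?_)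
        rw [Finset.sum_Icc_succ_top (Nat.le_succ_of_le (Nat.one_le_iff_ne_zero.mpr (by omega)))]
        simp only [Nat.add_sub_cancel, Finset.sum_apply, Pi.add_apply]
        ring
      linarith
  -- nonnegativity of the increments of r
  have hrpos : ∀ t ∈ Finset.Icc 1 T, 0 ≤ r t - r (t - 1) := by
    intro t ht
    obtain ⟨h1, h2⟩ := Finset.mem_Icc.mp ht
    rcases Nat.eq_or_lt_of_le h1 with h | h
    · have hpos := hεpos t h1 h2
      have h0 : t - 1 = 0 := by omega
      have hne : ¬ t = 0 := by omega
      simp only [hrdef, h0, if_pos rfl, if_neg hne, sub_zero]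
      exact inv_nonneg.mpr hpos.le
    · have ht1 : 1 ≤ t - 1 := by omega
      have hle : ε t ≤ ε (t - 1) := hεdec (t - 1) t ht1 (by omega) h2
      have hpos : 0 < ε t := hεpos t h1 h2
      have : (ε (t - 1))⁻¹ ≤ (ε t)⁻¹ := by
        exact inv_anti₀ hpos hle
      simp only [hrdef]
      rw [if_neg (by omega : ¬ t = 0), if_neg (by omega : ¬ t - 1 = 0)]
      linarith
  -- telescoping sum
  have tel : ∑ t ∈ Finset.Icc 1 T, (r t - r (t - 1)) = r T := by
    have h0 : r 0 = 0 := by simp [hrdef]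
    have gen : ∀ N : ℕ, ∑ t ∈ Finset.Icc 1 N, (r t - r (t - 1)) = r N - r 0 := by
      intro N
      induction N with
      | zero => simp
      | succ N ihN =>
        rw [Finset.sum_Icc_succ_top (Nat.one_le_iff_ne_zero.mpr (Nat.succ_ne_zero N)), ihN]
        simp only [Nat.add_sub_cancel]
        ring
    rw [gen T, h0, sub_zero]
  -- decompose the loss
  have decomp : ∑ t ∈ Finset.Icc 1 T, ∑ i, M t i * s t i
      = (∑ t ∈ Finset.Icc 1 T, ∑ i, M t i * (s t i + (k i - q i) * (r t - r (t - 1))))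
        + ∑ t ∈ Finset.Icc 1 T, (r t - r (t - 1)) * (∑ i, M t i * (q i - k i)) := by
    rw [← Finset.sum_add_distrib]
    refine Finset.sum_congr rfl (fun t _ => ?_)
    rw [Finset.mul_sum, ← Finset.sum_add_distrib]
    refine Finset.sum_congr rfl (fun i _ => ?_)
    ring
  have hTmem : T ∈ Finset.Icc 1 T := Finset.mem_Icc.mpr ⟨hT, le_refl T⟩
  -- bound the first part
  have hb1 : ∑ t ∈ Finset.Icc 1 T, ∑ i, M t i * (s t i + (k i - q i) * (r t - r (t - 1)))
      ≤ ∑ i, B i * ((∑ u ∈ Finset.Icc 1 T, s u) i + (k i - q i) * r T) :=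
    le_trans (key T hT (le_refl T)) (hM' T hTmem B hB1)
  -- bound the second part
  have hb2 : ∑ t ∈ Finset.Icc 1 T, (r t - r (t - 1)) * (∑ i, M t i * (q i - k i))
      ≤ r T * (∑ i, C i * (q i - k i)) := by
    calc ∑ t ∈ Finset.Icc 1 T, (r t - r (t - 1)) * (∑ i, M t i * (q i - k i))
        ≤ ∑ t ∈ Finset.Icc 1 T, (r t - r (t - 1)) * (∑ i, C i * (q i - k i)) :=
          Finset.sum_le_sum (fun t ht =>
            mul_le_mul_of_nonneg_left (hC2 (M t) (hM t ht).1) (hrpos t ht))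
      _ = (∑ t ∈ Finset.Icc 1 T, (r t - r (t - 1))) * (∑ i, C i * (q i - k i)) := by
          rw [Finset.sum_mul]
      _ = r T * (∑ i, C i * (q i - k i)) := by rw [tel]
  -- final algebra
  have halg : ∑ i, B i * ((∑ u ∈ Finset.Icc 1 T, s u) i + (k i - q i) * r T)
      = (∑ i, B i * ((∑ u ∈ Finset.Icc 1 T, s u) i + k i / ε T))
        - r T * ∑ i, B i * q i := by
    rw [Finset.mul_sum, ← Finset.sum_sub_distrib]
    refine Finset.sum_congr rfl (fun i _ => ?_)
    rw [hr_eq T hT (k i)]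
    ring
  have hrT : r T = 1 / ε T := by
    simp [hrdef, Nat.one_le_iff_ne_zero.mp hT, one_div]
  rw [decomp]
  rw [hrT] at halg hb2 hb1
  linarith
end

section
/- Let D = {e_1,...,e_n} be the set of unit vectors (n ≤ ∞), k ∈ ℝ^n with Σ_i e^{-k^i} ≤ 1, q a vector of i.i.d. standard exponential random variables, s_t ∈ [0,1]^n, and ε_t > 0 decreasing. Define the IFPL expected loss r_t := E[M(s_{1:t} + (k−q)/ε_t)·s_t]. Then r_{1:T} ≤ s_{1:T}^i + k^i/ε_T for every expert i. -/
open MeasureTheory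

/-!
For a fixed outcome ω, IFPL is follow-the-leader on the losses perturbed by (k - q(ω)) / ε_t.
The be-the-leader induction, together with the monotonicity of 1/ε_t, bounds its cumulative
loss by that of any expert i plus (k^i - q^i + M) / ε_T, where M is any bound on the
q^j - k^j. Taking M = Σ_j (q^j - k^j)⁺ and expectations, E q^i = 1 and
E (q^j - k^j)⁺ = e^{-k^j}, so E M ≤ 1 and the two contributions cancel.
-/

open Finset

section BeTheLeader

variable {ι : Type*} (s : ℕ → ι → ℝ) (p : ι → ℝ) (w : ℕ → ℝ) (J : ℕ → ι) {M : ℝ} {T : ℕ}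

def IsPerturbedLeader : Prop :=
  ∀ t j, ∑ u ∈ Icc 1 t, s u (J t) + p (J t) * w t ≤ ∑ u ∈ Icc 1 t, s u j + p j * w t

variable {s p w J}

theorem IsPerturbedLeader.sum_le_leader_add (hJ : IsPerturbedLeader s p w J) (hw0 : w 0 = 0)
    (hw : MonotoneOn w (Set.Iic T)) (hM : ∀ j, -p j ≤ M) :
    ∑ t ∈ Icc 1 T, s t (J t) ≤ ∑ u ∈ Icc 1 T, s u (J T) + (p (J T) + M) * w T := by
  induction T with
  | zero => simp [hw0]
  | succ T ih =>
    have ih := ih (hw.mono (Set.Iic_subset_Iic.mpr T.le_succ))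
    have hleader := hJ T (J (T + 1))
    have hw_succ : w T ≤ w (T + 1) :=
      hw (Set.mem_Iic.mpr T.le_succ) (Set.mem_Iic.mpr le_rfl) T.le_succ
    have hpM : 0 ≤ p (J (T + 1)) + M := by linarith [hM (J (T + 1))]
    rw [sum_Icc_succ_top (by omega), sum_Icc_succ_top (by omega)]
    linarith [mul_le_mul_of_nonneg_left hw_succ hpM]

theorem IsPerturbedLeader.sum_le_expert_add (hJ : IsPerturbedLeader s p w J) (hw0 : w 0 = 0)
    (hw : MonotoneOn w (Set.Iic T)) (hM : ∀ j, -p j ≤ M) (i : ι) :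
    ∑ t ∈ Icc 1 T, s t (J t) ≤ ∑ u ∈ Icc 1 T, s u i + (p i + M) * w T := by
  linarith [hJ.sum_le_leader_add hw0 hw hM, hJ T i]

end BeTheLeader

section PerturbationScale

-- The weight 1/ε_t of the perturbation; its value 0 at t = 0 starts the be-the-leader induction.
noncomputable def perturbationScale (ε : ℕ → ℝ) (t : ℕ) : ℝ := if t = 0 then 0 else (ε t)⁻¹

variable {ε : ℕ → ℝ} {t T : ℕ}

theorem perturbationScale_zero (ε : ℕ → ℝ) : perturbationScale ε 0 = 0 := if_pos rfl

theorem perturbationScale_of_ne_zero (ht : t ≠ 0) : perturbationScale ε t = (ε t)⁻¹ :=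
  if_neg ht

theorem perturbationScale_nonneg (hε : ∀ t, 0 < ε t) (t : ℕ) : 0 ≤ perturbationScale ε t := by
  unfold perturbationScale
  split_ifs
  exacts [le_rfl, (inv_pos.mpr (hε t)).le]

theorem perturbationScale_le_inv (hε : ∀ t, 0 < ε t) (t : ℕ) :
    perturbationScale ε t ≤ (ε t)⁻¹ := by
  unfold perturbationScale
  split_ifs
  exacts [(inv_pos.mpr (hε t)).le, le_rfl]

theorem perturbationScale_monotoneOn (hε : ∀ t, 0 < ε t) (hanti : AntitoneOn ε (Set.Icc 1 T)) :
    MonotoneOn (perturbationScale ε) (Set.Iic T) := by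
  intro a ha b hb hab
  rcases Nat.eq_zero_or_pos a with rfl | ha0
  · rw [perturbationScale_zero]
    exact perturbationScale_nonneg hε b
  · rw [perturbationScale_of_ne_zero ha0.ne', perturbationScale_of_ne_zero (by omega)]
    exact inv_anti₀ (hε b) (hanti ⟨ha0, ha⟩ ⟨ha0.trans_le hab, hb⟩ hab)

theorem isPerturbedLeader_perturbationScale {ι : Type*} {s : ℕ → ι → ℝ} {p : ι → ℝ}
    {J : ℕ → ι} (hJ : ∀ t j, (∑ u ∈ Icc 1 t, s u) (J t) + p (J t) / ε t ≤
      (∑ u ∈ Icc 1 t, s u) j + p j / ε t) :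
    IsPerturbedLeader s p (perturbationScale ε) J := by
  intro t j
  rcases Nat.eq_zero_or_pos t with rfl | ht
  · simp [perturbationScale_zero]
  · simpa [perturbationScale_of_ne_zero ht.ne', div_eq_mul_inv] using hJ t j

end PerturbationScale

section ExponentialTail

variable {Ω : Type*} [MeasurableSpace Ω] {μ : Measure Ω} {X : Ω → ℝ}

def HasExpTail (μ : Measure Ω) (X : Ω → ℝ) : Prop :=
  ∀ a : ℝ, 0 ≤ a → μ {ω | a ≤ X ω} = ENNReal.ofReal (Real.exp (-a))

theorem lintegral_exp_neg_Ioi_zero :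
    ∫⁻ t in Set.Ioi (0 : ℝ), ENNReal.ofReal (Real.exp (-t)) = 1 := by
  rw [← ofReal_integral_eq_lintegral_ofReal, integral_exp_neg_Ioi_zero, ENNReal.ofReal_one]
  · simpa [IntegrableOn] using exp_neg_integrableOn_Ioi 0 zero_lt_one
  · exact Filter.Eventually.of_forall fun x => (Real.exp_pos _).le

namespace HasExpTail

variable (h : HasExpTail μ X) (hX : Measurable X) {c : ℝ}
include h hX

theorem lintegral_posPart_sub (hc : 0 ≤ c) :
    ∫⁻ ω, ENNReal.ofReal (X ω - c)⁺ ∂μ = ENNReal.ofReal (Real.exp (-c)) := by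
  rw [lintegral_eq_lintegral_meas_le μ (ae_of_all _ fun _ => posPart_nonneg _)
    (hX.sub_const c).posPart.aemeasurable]
  calc ∫⁻ t in Set.Ioi 0, μ {ω | t ≤ (X ω - c)⁺}
      = ∫⁻ t in Set.Ioi 0, ENNReal.ofReal (Real.exp (-c)) * ENNReal.ofReal (Real.exp (-t)) := by
        refine setLIntegral_congr_fun measurableSet_Ioi fun t (ht : 0 < t) => ?_
        have hset : {ω | t ≤ (X ω - c)⁺} = {ω | t + c ≤ X ω} := by
          ext ω
          change t ≤ max (X ω - c) 0 ↔ t + c ≤ X ω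
          rw [le_max_iff, or_iff_left (not_le.mpr ht)]
          constructor <;> intro <;> linarith
        rw [hset, h _ (by positivity), ← ENNReal.ofReal_mul (Real.exp_pos _).le, ← Real.exp_add,
          neg_add, add_comm]
    _ = ENNReal.ofReal (Real.exp (-c)) := by
        rw [lintegral_const_mul _ (by fun_prop), lintegral_exp_neg_Ioi_zero, mul_one]

theorem integrable_posPart_sub (hc : 0 ≤ c) : Integrable (fun ω => (X ω - c)⁺) μ :=
  ⟨(hX.sub_const c).posPart.aestronglyMeasurable,
    (hasFiniteIntegral_iff_ofReal (ae_of_all _ fun _ => posPart_nonneg _)).mpr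
      (by rw [h.lintegral_posPart_sub hX hc]; exact ENNReal.ofReal_lt_top)⟩

theorem integral_posPart_sub (hc : 0 ≤ c) : ∫ ω, (X ω - c)⁺ ∂μ = Real.exp (-c) := by
  rw [integral_eq_lintegral_of_nonneg_ae (ae_of_all _ fun _ => posPart_nonneg _)
    (hX.sub_const c).posPart.aestronglyMeasurable, h.lintegral_posPart_sub hX hc,
    ENNReal.toReal_ofReal (Real.exp_pos _).le]

theorem posPart_ae_eq [IsProbabilityMeasure μ] : (fun ω => (X ω - 0)⁺) =ᵐ[μ] X := by
  have hnonneg : ∀ᵐ ω ∂μ, 0 ≤ X ω := by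
    rw [ae_iff_measure_eq (measurableSet_le measurable_const hX).nullMeasurableSet,
      h 0 le_rfl]
    simp
  filter_upwards [hnonneg] with ω hω
  rw [sub_zero, posPart_eq_self.mpr hω]

theorem integrable [IsProbabilityMeasure μ] : Integrable X μ :=
  (h.integrable_posPart_sub hX le_rfl).congr (h.posPart_ae_eq hX)

theorem integral_eq_one [IsProbabilityMeasure μ] : ∫ ω, X ω ∂μ = 1 := by
  rw [← integral_congr_ae (h.posPart_ae_eq hX), h.integral_posPart_sub hX le_rfl, neg_zero,
    Real.exp_zero]

end HasExpTail

theorem le_sum_posPart {ι : Type*} [Fintype ι] (f : ι → ℝ) (j : ι) : f j ≤ ∑ i, (f i)⁺ :=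
  (le_posPart _).trans (single_le_sum (f := fun i => (f i)⁺) (fun _ _ => posPart_nonneg _)
    (mem_univ j))

theorem nonneg_of_sum_exp_neg_le_one {ι : Type*} [Fintype ι] {k : ι → ℝ}
    (hk : ∑ j, Real.exp (-k j) ≤ 1) (i : ι) : 0 ≤ k i := by
  have : Real.exp (-k i) ≤ 1 :=
    (single_le_sum (fun j _ => (Real.exp_pos (-k j)).le) (mem_univ i)).trans hk
  linarith [Real.exp_le_one_iff.mp this]

variable {ι : Type*} [Fintype ι] {q : ι → Ω → ℝ} (hq : ∀ j, Measurable (q j))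
  (htail : ∀ j, HasExpTail μ (q j)) {k : ι → ℝ} (hk : ∑ j, Real.exp (-k j) ≤ 1) (i : ι)
include hq htail hk

theorem integrable_sub_add_sum_posPart [IsProbabilityMeasure μ] :
    Integrable (fun ω => k i - q i ω + ∑ j, (q j ω - k j)⁺) μ :=
  ((integrable_const _).sub ((htail i).integrable (hq i))).add <|
    integrable_finsetSum _ fun j _ =>
      (htail j).integrable_posPart_sub (hq j) (nonneg_of_sum_exp_neg_le_one hk j)

theorem integral_sub_add_sum_posPart_le [IsProbabilityMeasure μ] :
    ∫ ω, (k i - q i ω + ∑ j, (q j ω - k j)⁺) ∂μ ≤ k i := by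
  have hsub : Integrable (fun ω => k i - q i ω) μ :=
    (integrable_const _).sub ((htail i).integrable (hq i))
  have hpos : ∀ j ∈ univ, Integrable (fun ω => (q j ω - k j)⁺) μ := fun j _ =>
    (htail j).integrable_posPart_sub (hq j) (nonneg_of_sum_exp_neg_le_one hk j)
  rw [integral_add hsub (integrable_finsetSum _ hpos),
    integral_sub (integrable_const _) ((htail i).integrable (hq i)), integral_const, (htail i).integral_eq_one (hq i), integral_finsetSum _ hpos]
  simp only [probReal_univ, smul_eq_mul, one_mul]
  rw [sum_congr rfl fun j _ =>
    (htail j).integral_posPart_sub (hq j) (nonneg_of_sum_exp_neg_le_one hk j)]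
  linarith

end ExponentialTail

theorem ifpl_bounded_by_expert_general {Ω : Type*} [MeasurableSpace Ω] (μ : Measure Ω)
    [IsProbabilityMeasure μ] (n : ℕ) (T : ℕ)
    (q : Fin n → Ω → ℝ) (hmeas : ∀ i, Measurable (q i))
    (htail : ∀ i, ∀ a : ℝ, 0 ≤ a → μ {ω | a ≤ q i ω} = ENNReal.ofReal (Real.exp (-a)))
    (k : Fin n → ℝ) (hk : ∑ i, Real.exp (-k i) ≤ 1)
    (s : ℕ → Fin n → ℝ)
    (ε : ℕ → ℝ) (hεpos : ∀ t, 0 < ε t)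
    (hεdec : ∀ t₁ t₂, 1 ≤ t₁ → t₁ ≤ t₂ → t₂ ≤ T → ε t₂ ≤ ε t₁)
    -- the IFPL decision J t minimizes s_{1:t} + (k - q)/ε_t
    (J : ℕ → Ω → Fin n) (hJmeas : ∀ t, Measurable (J t))
    (hJ : ∀ t ω i,
      (∑ u ∈ Finset.Icc 1 t, s u) (J t ω) + (k (J t ω) - q (J t ω) ω) / ε t ≤
        (∑ u ∈ Finset.Icc 1 t, s u) i + (k i - q i ω) / ε t)
    -- the expected IFPL loss
    (r : ℕ → ℝ) (hr : ∀ t, r t = ∫ ω, s t (J t ω) ∂μ) :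
    ∀ i, ∑ t ∈ Finset.Icc 1 T, r t ≤
      (∑ t ∈ Finset.Icc 1 T, s t i) + k i / ε T := by
  intro i
  set w := perturbationScale ε
  set F : Ω → ℝ := fun ω => k i - q i ω + ∑ j, (q j ω - k j)⁺
  have hpointwise : ∀ ω, ∑ t ∈ Icc 1 T, s t (J t ω) ≤ ∑ t ∈ Icc 1 T, s t i + F ω * w T :=
    fun ω => (isPerturbedLeader_perturbationScale fun t j => hJ t ω j).sum_le_expert_add
      (perturbationScale_zero ε)
      (perturbationScale_monotoneOn hεpos fun a ha b hb hab => hεdec a b ha.1 hab hb.2)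
      (fun j => (neg_sub _ _).trans_le (le_sum_posPart (fun j => q j ω - k j) j)) i
  have hloss : ∀ t ∈ Icc 1 T, Integrable (fun ω => s t (J t ω)) μ := fun t _ =>
    Integrable.of_finite.comp_measurable (hJmeas t)
  have hF : Integrable F μ := integrable_sub_add_sum_posPart hmeas htail hk i
  calc ∑ t ∈ Icc 1 T, r t = ∫ ω, ∑ t ∈ Icc 1 T, s t (J t ω) ∂μ := by
        rw [integral_finsetSum _ hloss]
        exact sum_congr rfl fun t _ => hr t
    _ ≤ ∫ ω, (∑ t ∈ Icc 1 T, s t i + F ω * w T) ∂μ :=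
        integral_mono (integrable_finsetSum _ hloss) ((integrable_const _).add (hF.mul_const _))
          hpointwise
    _ = ∑ t ∈ Icc 1 T, s t i + (∫ ω, F ω ∂μ) * w T := by
        rw [integral_add (integrable_const _) (hF.mul_const _), integral_const,
          integral_mul_const]
        simp only [probReal_univ, smul_eq_mul, one_mul]
    _ ≤ ∑ t ∈ Icc 1 T, s t i + k i * (ε T)⁻¹ := by
        gcongr ∑ t ∈ Icc 1 T, s t i + ?_
        exact mul_le_mul (integral_sub_add_sum_posPart_le hmeas htail hk i)
          (perturbationScale_le_inv hεpos T) (perturbationScale_nonneg hεpos T)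
          (nonneg_of_sum_exp_neg_le_one hk i)
    _ = ∑ t ∈ Icc 1 T, s t i + k i / ε T := by rw [div_eq_mul_inv]

/-- IFPL bounded by BEH (Corollary 3): r_{1:T} ≤ s_{1:T}ⁱ + kⁱ/ε_T for every expert i. -/
theorem ifpl_bounded_by_expert {Ω : Type*} [MeasurableSpace Ω] (μ : Measure Ω)
    [IsProbabilityMeasure μ] (n : ℕ) (hn : 1 ≤ n) (T : ℕ) (hT : 1 ≤ T)
    (q : Fin n → Ω → ℝ) (hmeas : ∀ i, Measurable (q i))
    (hindep : ProbabilityTheory.iIndepFun q μ)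
    (htail : ∀ i, ∀ a : ℝ, 0 ≤ a → μ {ω | a ≤ q i ω} = ENNReal.ofReal (Real.exp (-a)))
    (htail' : ∀ i, ∀ a : ℝ, a < 0 → μ {ω | a ≤ q i ω} = 1)
    (k : Fin n → ℝ) (hk : ∑ i, Real.exp (-k i) ≤ 1)
    (s : ℕ → Fin n → ℝ) (hs : ∀ t i, s t i ∈ Set.Icc (0 : ℝ) 1)
    (ε : ℕ → ℝ) (hεpos : ∀ t, 0 < ε t)
    (hεdec : ∀ t₁ t₂, 1 ≤ t₁ → t₁ ≤ t₂ → t₂ ≤ T → ε t₂ ≤ ε t₁)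
    -- the IFPL decision J t minimizes s_{1:t} + (k - q)/ε_t
    (J : ℕ → Ω → Fin n) (hJmeas : ∀ t, Measurable (J t))
    (hJ : ∀ t ω i,
      (∑ u ∈ Finset.Icc 1 t, s u) (J t ω) + (k (J t ω) - q (J t ω) ω) / ε t ≤
        (∑ u ∈ Finset.Icc 1 t, s u) i + (k i - q i ω) / ε t)
    -- the expected IFPL loss
    (r : ℕ → ℝ) (hr : ∀ t, r t = ∫ ω, s t (J t ω) ∂μ) :
    ∀ i, ∑ t ∈ Finset.Icc 1 T, r t ≤
      (∑ t ∈ Finset.Icc 1 T, s t i) + k i / ε T :=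
  ifpl_bounded_by_expert_general μ n T q hmeas htail k hk s ε hεpos hεdec J hJmeas hJ r hr
end

section
/- Let s ∈ ℝ^n, s_t ∈ [0,1]^n, ε > 0, and let q^1,...,q^n be i.i.d. standard exponential random variables. Define I := argmin_i {s^i − q^i/ε} and J := argmin_i {s^i + s_t^i − q^i/ε}. Then P[I = j] ≤ e^{ε} P[J = j] for every j. -/
/-!
Fix `j` and condition on the perturbations `q i`, `i ≠ j`. Up to a null set, `I = j` exactly
when `q j` reaches a threshold `g` determined by them, and `J = j` when it reaches a threshold
`g'`; since `0 ≤ st ≤ 1`, `g' ≤ g + ε`. The exponential tail satisfies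
`P[a ≤ q j] ≤ e^ε P[a + ε ≤ q j]` for every `a`, and independence lets this be applied at the
random level `a = g`.
-/

open MeasureTheory ProbabilityTheory
open scoped ENNReal

section TailShift

variable {Ω γ : Type*} [MeasurableSpace Ω] [MeasurableSpace γ] {μ : Measure Ω}

theorem ProbabilityTheory.IndepFun.measure_le_le_mul_measure_add_le [IsFiniteMeasure μ]
    {X : Ω → ℝ} {Y : Ω → γ} (hX : Measurable X) (hY : Measurable Y) (hYX : IndepFun Y X μ)
    {g : γ → ℝ} (hg : Measurable g) {K : ℝ≥0∞} (hK : K ≠ ∞) {ε : ℝ}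
    (hshift : ∀ c, μ {ω | c ≤ X ω} ≤ K * μ {ω | c + ε ≤ X ω}) :
    μ {ω | g (Y ω) ≤ X ω} ≤ K * μ {ω | g (Y ω) + ε ≤ X ω} := by
  rw [indepFun_iff_map_prod_eq_prod_map_map hY.aemeasurable hX.aemeasurable] at hYX
  have hsection : ∀ h : γ → ℝ, Measurable h →
      μ {ω | h (Y ω) ≤ X ω} = ∫⁻ y, μ {ω | h y ≤ X ω} ∂μ.map Y := by
    intro h hh
    have hA : MeasurableSet {p : γ × ℝ | h p.1 ≤ p.2} :=
      measurableSet_le (hh.comp measurable_fst) measurable_snd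
    calc μ {ω | h (Y ω) ≤ X ω} = μ.map (fun ω => (Y ω, X ω)) {p | h p.1 ≤ p.2} :=
          (Measure.map_apply (hY.prodMk hX) hA).symm
      _ = _ := by
        rw [hYX, Measure.prod_apply hA]
        exact lintegral_congr fun y => Measure.map_apply hX (measurableSet_Ici (a := h y))
  rw [hsection g hg, hsection (g · + ε) (hg.add_const ε), ← lintegral_const_mul' _ _ hK]
  exact lintegral_mono fun y => hshift (g y)

theorem measure_le_eq_ofReal_exp_neg_max {X : Ω → ℝ}
    (htail : ∀ a : ℝ, 0 ≤ a → μ {ω | a ≤ X ω} = ENNReal.ofReal (Real.exp (-a)))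
    (htail' : ∀ a : ℝ, a < 0 → μ {ω | a ≤ X ω} = 1) (a : ℝ) :
    μ {ω | a ≤ X ω} = ENNReal.ofReal (Real.exp (-max a 0)) := by
  rcases le_or_gt 0 a with ha | ha
  · rw [max_eq_left ha, htail a ha]
  · rw [max_eq_right ha.le, htail' a ha, neg_zero, Real.exp_zero, ENNReal.ofReal_one]

theorem measure_le_le_exp_mul_measure_add_le {X : Ω → ℝ}
    (htail : ∀ a : ℝ, 0 ≤ a → μ {ω | a ≤ X ω} = ENNReal.ofReal (Real.exp (-a)))
    (htail' : ∀ a : ℝ, a < 0 → μ {ω | a ≤ X ω} = 1) {ε : ℝ} (hε : 0 ≤ ε) (c : ℝ) :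
    μ {ω | c ≤ X ω} ≤ ENNReal.ofReal (Real.exp ε) * μ {ω | c + ε ≤ X ω} := by
  rw [measure_le_eq_ofReal_exp_neg_max htail htail', measure_le_eq_ofReal_exp_neg_max htail htail',
    ← ENNReal.ofReal_mul (Real.exp_nonneg _), ← Real.exp_add]
  have : max (c + ε) 0 ≤ max c 0 + ε :=
    max_le (by linarith [le_max_left c 0]) (by linarith [le_max_right c 0])
  gcongr
  linarith

end TailShift

theorem eq_iff_forall_le_of_forall_ne_lt {ι α : Type*} [Preorder α] {f : ι → α} {k j : ι}
    (h : ∀ i, i ≠ k → f k < f i) : k = j ↔ ∀ i, f j ≤ f i := by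
  refine ⟨?_, fun hj => by_contra fun hne => (h j (Ne.symm hne)).not_ge (hj k)⟩
  rintro rfl i
  rcases eq_or_ne i k with rfl | hi
  · exact le_rfl
  · exact (h i hi).le

theorem sub_div_le_sub_div_iff {a b x y ε : ℝ} (hε : 0 < ε) :
    a - x / ε ≤ b - y / ε ↔ y + ε * (a - b) ≤ x := by
  rw [← sub_nonneg, show b - y / ε - (a - x / ε) = (x - (y + ε * (a - b))) / ε by
    field_simp; ring, le_div_iff₀ hε, zero_mul, sub_nonneg]

section ArgminThreshold

variable {ι : Type*} [Fintype ι] [DecidableEq ι] {ε : ℝ} {v : ι → ℝ} {j : ι}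

/-- The least value of `x j` for which `j` minimises `v i - x i / ε`, where `y` lists the other
coordinates of `x`. -/
def argminThreshold (ε : ℝ) (v : ι → ℝ) (j : ι) [Nonempty ({j}ᶜ : Finset ι)]
    (y : ({j}ᶜ : Finset ι) → ℝ) : ℝ :=
  Finset.univ.sup' Finset.univ_nonempty fun i => y i + ε * (v j - v i)

theorem measurable_argminThreshold [Nonempty ({j}ᶜ : Finset ι)] :
    Measurable (argminThreshold ε v j) := by
  unfold argminThreshold
  fun_prop

theorem forall_le_iff_argminThreshold_le [Nonempty ({j}ᶜ : Finset ι)] (hε : 0 < ε)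
    (x : ι → ℝ) :
    (∀ i, v j - x j / ε ≤ v i - x i / ε) ↔ argminThreshold ε v j (fun i => x i) ≤ x j := by
  simp only [argminThreshold, Finset.sup'_le_iff, Finset.mem_univ, true_implies,
    sub_div_le_sub_div_iff hε]
  refine ⟨fun h i => h i, fun h i => ?_⟩
  rcases eq_or_ne i j with rfl | hi
  · simp
  · exact h ⟨i, by simpa using hi⟩

theorem argminThreshold_add_le [Nonempty ({j}ᶜ : Finset ι)] (hε : 0 ≤ ε) {w : ι → ℝ}
    (hw : ∀ i, w i ∈ Set.Icc 0 1) (y : ({j}ᶜ : Finset ι) → ℝ) :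
    argminThreshold ε (fun i => v i + w i) j y ≤ argminThreshold ε v j y + ε := by
  refine Finset.sup'_le _ _ fun i _ => ?_
  calc y i + ε * (v j + w j - (v i + w i)) = y i + ε * (v j - v i) + ε * (w j - w i) := by ring
    _ ≤ argminThreshold ε v j y + ε * 1 :=
      add_le_add (Finset.le_sup' (fun i => y i + ε * (v j - v i)) (Finset.mem_univ i))
        (mul_le_mul_of_nonneg_left (by linarith [(hw j).2, (hw i).1]) hε)
    _ = argminThreshold ε v j y + ε := by rw [mul_one]

theorem setOf_eq_ae_eq_setOf_argminThreshold_le [Nonempty ({j}ᶜ : Finset ι)] {Ω : Type*}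
    [MeasurableSpace Ω] {μ : Measure Ω} (hε : 0 < ε) {x : ι → Ω → ℝ} {I : Ω → ι}
    (hI : ∀ᵐ ω ∂μ, ∀ i, i ≠ I ω → v (I ω) - x (I ω) ω / ε < v i - x i ω / ε) :
    {ω | I ω = j} =ᵐ[μ] {ω | argminThreshold ε v j (fun i => x i ω) ≤ x j ω} := by
  filter_upwards [hI] with ω hω
  exact propext ((eq_iff_forall_le_of_forall_ne_lt (f := fun i => v i - x i ω / ε) hω).trans
    (forall_le_iff_argminThreshold_le hε (x · ω)))

end ArgminThreshold

theorem fpl_ifpl_prob_bound_general {Ω : Type*} [MeasurableSpace Ω] (μ : Measure Ω)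
    [IsProbabilityMeasure μ] (n : ℕ)
    (q : Fin n → Ω → ℝ) (hmeas : ∀ i, Measurable (q i))
    (hindep : ProbabilityTheory.iIndepFun q μ)
    (htail : ∀ i, ∀ a : ℝ, 0 ≤ a → μ {ω | a ≤ q i ω} = ENNReal.ofReal (Real.exp (-a)))
    (htail' : ∀ i, ∀ a : ℝ, a < 0 → μ {ω | a ≤ q i ω} = 1)
    (s st : Fin n → ℝ) (hst : ∀ i, st i ∈ Set.Icc (0 : ℝ) 1) (ε : ℝ) (hε : 0 < ε)
    (I J : Ω → Fin n)
    (hIuniq : ∀ᵐ ω ∂μ, ∀ i, i ≠ I ω → s (I ω) - q (I ω) ω / ε < s i - q i ω / ε)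
    (hJuniq : ∀ᵐ ω ∂μ, ∀ i, i ≠ J ω →
      s (J ω) + st (J ω) - q (J ω) ω / ε < s i + st i - q i ω / ε)
    (j : Fin n) :
    μ {ω | I ω = j} ≤ ENNReal.ofReal (Real.exp ε) * μ {ω | J ω = j} := by
  rcases isEmpty_or_nonempty ({j}ᶜ : Finset (Fin n)) with hj | hj
  · have hall : ∀ K : Ω → Fin n, {ω | K ω = j} = Set.univ := fun K =>
      Set.eq_univ_of_forall fun ω => by_contra fun hK => hj.false ⟨K ω, by simpa using hK⟩
    rw [hall I, hall J, measure_univ, mul_one]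
    exact ENNReal.one_le_ofReal.mpr (Real.one_le_exp hε.le)
  have hind : IndepFun (fun ω (i : ({j}ᶜ : Finset (Fin n))) => q i ω) (q j) μ :=
    (hindep.indepFun_finset {j}ᶜ {j} disjoint_compl_left hmeas).comp measurable_id
      (measurable_pi_apply (⟨j, Finset.mem_singleton_self j⟩ : ({j} : Finset (Fin n))))
  have hY : Measurable fun ω (i : ({j}ᶜ : Finset (Fin n))) => q i ω :=
    measurable_pi_lambda _ fun i => hmeas i
  calc μ {ω | I ω = j} = μ {ω | argminThreshold ε s j (fun i => q i ω) ≤ q j ω} :=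
        measure_congr (setOf_eq_ae_eq_setOf_argminThreshold_le hε hIuniq)
    _ ≤ ENNReal.ofReal (Real.exp ε) *
          μ {ω | argminThreshold ε s j (fun i => q i ω) + ε ≤ q j ω} :=
        hind.measure_le_le_mul_measure_add_le (hmeas j) hY measurable_argminThreshold
          ENNReal.ofReal_ne_top
          (measure_le_le_exp_mul_measure_add_le (htail j) (htail' j) hε.le)
    _ ≤ ENNReal.ofReal (Real.exp ε) *
          μ {ω | argminThreshold ε (fun i => s i + st i) j (fun i => q i ω) ≤ q j ω} := by
        gcongr _ * μ ?_
        exact fun ω hω => (argminThreshold_add_le hε.le hst _).trans hω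
    _ = ENNReal.ofReal (Real.exp ε) * μ {ω | J ω = j} := by
        rw [measure_congr (setOf_eq_ae_eq_setOf_argminThreshold_le
          (v := fun i => s i + st i) hε hJuniq)]

/-- Key FPL-vs-IFPL lemma: P[I = j] ≤ e^ε · P[J = j], where I minimizes
sⁱ - qⁱ/ε and J minimizes sⁱ + s_tⁱ - qⁱ/ε, for i.i.d. standard exponential q. -/
theorem fpl_ifpl_prob_bound {Ω : Type*} [MeasurableSpace Ω] (μ : Measure Ω)
    [IsProbabilityMeasure μ] (n : ℕ) (hn : 1 ≤ n)
    (q : Fin n → Ω → ℝ) (hmeas : ∀ i, Measurable (q i))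
    (hindep : ProbabilityTheory.iIndepFun q μ)
    (htail : ∀ i, ∀ a : ℝ, 0 ≤ a → μ {ω | a ≤ q i ω} = ENNReal.ofReal (Real.exp (-a)))
    (htail' : ∀ i, ∀ a : ℝ, a < 0 → μ {ω | a ≤ q i ω} = 1)
    (s st : Fin n → ℝ) (hst : ∀ i, st i ∈ Set.Icc (0 : ℝ) 1) (ε : ℝ) (hε : 0 < ε)
    (I J : Ω → Fin n) (hImeas : Measurable I) (hJmeas : Measurable J)
    (hI : ∀ ω i, s (I ω) - q (I ω) ω / ε ≤ s i - q i ω / ε)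
    (hJ : ∀ ω i, s (J ω) + st (J ω) - q (J ω) ω / ε ≤ s i + st i - q i ω / ε)
    (hIuniq : ∀ᵐ ω ∂μ, ∀ i, i ≠ I ω → s (I ω) - q (I ω) ω / ε < s i - q i ω / ε)
    (hJuniq : ∀ᵐ ω ∂μ, ∀ i, i ≠ J ω →
      s (J ω) + st (J ω) - q (J ω) ω / ε < s i + st i - q i ω / ε)
    (j : Fin n) :
    μ {ω | I ω = j} ≤ ENNReal.ofReal (Real.exp ε) * μ {ω | J ω = j} :=
  fpl_ifpl_prob_bound_general μ n q hmeas hindep htail htail' s st hst ε hε I J hIuniq hJuniq j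
end

section
/- Under the setting of the previous statement (D = unit vectors, losses s_t ∈ [0,1]^n, exponential perturbations), the expected FPL loss ℓ_t := E[M(s_{<t}+(k−q)/ε_t)·s_t] and expected IFPL loss r_t := E[M(s_{1:t}+(k−q)/ε_t)·s_t] satisfy ℓ_t ≤ e^{ε_t} r_t. Consequently ℓ_{1:T} − r_{1:T} ≤ Σ_{t=1}^T ε_t ℓ_t. -/
open MeasureTheory ProbabilityTheory Set

/-!
Almost surely the leader is unique, so `{I_t = i}` is, up to a null set, the event that `q_i`
exceeds a threshold depending only on the other coordinates `q_j`. Replacing `s_{<t}` by `s_{1:t}`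
raises this threshold by at most `ε_t`, since `s_t ∈ [0,1]^n`. By memorylessness, raising the
threshold of an exponential variable by `ε` lowers its tail by a factor at most `e^{-ε}`;
integrating over the independent coordinates `q_j` gives `P(I_t = i) ≤ e^{ε_t} P(J_t = i)`, hence
`ℓ_t ≤ e^{ε_t} r_t`. Then `r_t ≥ e^{-ε_t} ℓ_t ≥ (1 - ε_t) ℓ_t` sums to the regret bound.
-/

def HasExponentialTail (ρ : Measure ℝ) : Prop :=
  ∀ a, 0 ≤ a → ρ (Ici a) = ENNReal.ofReal (Real.exp (-a))

section ExponentialTail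

variable {ρ : Measure ℝ} [IsProbabilityMeasure ρ]

theorem measure_Ioi_of_exp_tail
    (hρ : HasExponentialTail ρ) (a : ℝ) :
    ρ (Ioi a) = ENNReal.ofReal (Real.exp (-max a 0)) := by
  rcases lt_or_ge a 0 with ha | ha
  · have h0 := hρ 0 le_rfl
    rw [neg_zero, Real.exp_zero, ENNReal.ofReal_one] at h0
    rw [max_eq_right ha.le, neg_zero, Real.exp_zero, ENNReal.ofReal_one]
    exact le_antisymm prob_le_one (h0 ▸ measure_mono (Ici_subset_Ioi.2 ha))
  rw [max_eq_left ha]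
  refine le_antisymm (hρ a ha ▸ measure_mono Ioi_subset_Ici_self) ?_
  -- `Ioi a` contains every `Ici (a + δ)`, whose measure tends to `e^{-a}` as `δ → 0⁺`
  have hlim : Filter.Tendsto (fun δ => ENNReal.ofReal (Real.exp (-(a + δ))))
      (nhdsWithin 0 (Ioi 0)) (nhds (ENNReal.ofReal (Real.exp (-a)))) := by
    have : Continuous fun δ => ENNReal.ofReal (Real.exp (-(a + δ))) :=
      ENNReal.continuous_ofReal.comp (by fun_prop)
    simpa using (this.tendsto 0).mono_left nhdsWithin_le_nhds
  refine le_of_tendsto hlim (eventually_nhdsWithin_of_forall fun δ (hδ : 0 < δ) => ?_)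
  rw [← hρ (a + δ) (by linarith)]
  exact measure_mono fun y (hy : a + δ ≤ y) => show a < y by linarith

theorem measure_Ioi_le_exp_mul_measure_Ioi
    (hρ : HasExponentialTail ρ)
    {e a b : ℝ} (he : 0 ≤ e) (hb : b ≤ a + e) :
    ρ (Ioi a) ≤ ENNReal.ofReal (Real.exp e) * ρ (Ioi b) := by
  rw [measure_Ioi_of_exp_tail hρ, measure_Ioi_of_exp_tail hρ,
    ← ENNReal.ofReal_mul (Real.exp_pos e).le, ← Real.exp_add]
  gcongr
  have : max b 0 ≤ e + max a 0 := max_le (by linarith [le_max_left a 0]) (by positivity)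
  linarith

theorem measure_forall_lt_le_exp_mul {ι : Type*} [Fintype ι]
    (hρ : HasExponentialTail ρ)
    {e : ℝ} (he : 0 ≤ e) {c c' : ι → ℝ} (hc : ∀ j, c' j ≤ c j + e) :
    ρ {y | ∀ j, c j < y} ≤ ENNReal.ofReal (Real.exp e) * ρ {y | ∀ j, c' j < y} := by
  rcases isEmpty_or_nonempty ι with hι | hι
  · simpa using Real.one_le_exp he
  have hIoi (d : ι → ℝ) : {y | ∀ j, d j < y} = Ioi (Finset.univ.sup' Finset.univ_nonempty d) := by
    ext y; simp [Finset.sup'_lt_iff]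
  rw [hIoi, hIoi]
  refine measure_Ioi_le_exp_mul_measure_Ioi hρ he (Finset.sup'_le _ _ fun j _ => ?_)
  linarith [hc j, Finset.le_sup' c (Finset.mem_univ j)]

end ExponentialTail

theorem measure_preimage_le_of_indepFun {Ω E β : Type*} [MeasurableSpace Ω] [MeasurableSpace E]
    [MeasurableSpace β] {μ : Measure Ω} [IsFiniteMeasure μ] {Z : Ω → E} {X : Ω → β}
    (hZ : Measurable Z) (hX : Measurable X) (hind : IndepFun Z X μ)
    {U V : Set (E × β)} (hU : MeasurableSet U) (hV : MeasurableSet V) (C : ENNReal)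
    (hUV : ∀ z, μ.map X (Prod.mk z ⁻¹' U) ≤ C * μ.map X (Prod.mk z ⁻¹' V)) :
    μ ((fun ω => (Z ω, X ω)) ⁻¹' U) ≤ C * μ ((fun ω => (Z ω, X ω)) ⁻¹' V) := by
  have hpair : Measurable fun ω => (Z ω, X ω) := hZ.prodMk hX
  have hmap := (indepFun_iff_map_prod_eq_prod_map_map hZ.aemeasurable hX.aemeasurable).1 hind
  rw [← Measure.map_apply hpair hU, ← Measure.map_apply hpair hV, hmap,
    Measure.prod_apply hU, Measure.prod_apply hV,
    ← lintegral_const_mul _ (measurable_measure_prodMk_left hV)]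
  exact lintegral_mono hUV

theorem preimage_singleton_ae_eq_of_ae_strict_argmin {Ω ι β : Type*} [MeasurableSpace Ω]
    {μ : Measure Ω} [Preorder β] (φ : Ω → ι → β) {X : Ω → ι}
    (hX : ∀ᵐ ω ∂μ, ∀ j, j ≠ X ω → φ ω (X ω) < φ ω j) (i : ι) :
    X ⁻¹' {i} =ᵐ[μ] {ω | ∀ j, j ≠ i → φ ω i < φ ω j} := by
  filter_upwards [hX] with ω hω
  refine propext ⟨fun (h : X ω = i) => h ▸ hω, fun h => ?_⟩
  by_contra hne
  exact lt_asymm (hω i (Ne.symm hne)) (h (X ω) hne)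

theorem add_sub_div_lt_add_sub_div_iff {e : ℝ} (he : 0 < e) (v v' k k' x x' : ℝ) :
    v + (k - x) / e < v' + (k' - x') / e ↔ x' + e * (v - v') + k - k' < x := by
  have : v' + (k' - x') / e - (v + (k - x) / e) = (x - (x' + e * (v - v') + k - k')) / e := by
    field_simp; ring
  rw [← sub_pos, this, div_pos_iff_of_pos_right he, sub_pos]

theorem measureReal_strictLeader_le_exp_mul {Ω ι : Type*} [MeasurableSpace Ω] {μ : Measure Ω}
    [IsProbabilityMeasure μ] [Fintype ι] {q : ι → Ω → ℝ} (hq : ∀ j, Measurable (q j))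
    (hind : iIndepFun q μ) {i : ι}
    (htail : ∀ a, 0 ≤ a → μ {ω | a ≤ q i ω} = ENNReal.ofReal (Real.exp (-a)))
    {e : ℝ} (he : 0 < e) (k : ι → ℝ) {v w : ι → ℝ} (hvw : ∀ j, w j - v j ∈ Icc 0 1) :
    μ.real {ω | ∀ j, j ≠ i → v i + (k i - q i ω) / e < v j + (k j - q j ω) / e} ≤
      Real.exp e * μ.real {ω | ∀ j, j ≠ i → w i + (k i - q i ω) / e < w j + (k j - q j ω) / e} := by
  classical
  set S := Finset.univ.erase i
  let Z : Ω → S → ℝ := fun ω j => q j ω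
  have hZ : Measurable Z := measurable_pi_lambda _ fun j => hq j
  have hZi : IndepFun Z (q i) μ := by
    have h := hind.indepFun_finset S {i} (by simp [S]) hq
    exact h.comp measurable_id
      (measurable_pi_apply (⟨i, Finset.mem_singleton_self i⟩ : ({i} : Finset ι)))
  -- the threshold `q i` must exceed for `i` to be the strict leader under cumulative loss `u`
  let c (u : ι → ℝ) (j : S) (z : S → ℝ) : ℝ := z j + e * (u i - u j) + k i - k j
  let U (u : ι → ℝ) : Set ((S → ℝ) × ℝ) := {p | ∀ j, c u j p.1 < p.2}
  have hU (u : ι → ℝ) : MeasurableSet (U u) := by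
    simp only [U, ofPred_forall]
    exact .iInter fun j => measurableSet_lt (by fun_prop) measurable_snd
  have hpre (u : ι → ℝ) :
      {ω | ∀ j, j ≠ i → u i + (k i - q i ω) / e < u j + (k j - q j ω) / e} =
        (fun ω => (Z ω, q i ω)) ⁻¹' U u := by
    ext ω
    simp [U, c, Z, S, add_sub_div_lt_add_sub_div_iff he]
  have hρ : HasExponentialTail (μ.map (q i)) := fun a ha => by
    rw [Measure.map_apply (hq i) measurableSet_Ici]; exact htail a ha
  have : IsProbabilityMeasure (μ.map (q i)) := Measure.isProbabilityMeasure_map (hq i).aemeasurable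
  have hμ := measure_preimage_le_of_indepFun hZ (hq i) hZi (hU v) (hU w) _ fun z =>
    measure_forall_lt_le_exp_mul hρ he.le (c := fun j => c v j z) (c' := fun j => c w j z)
      fun j => by
        have : e * ((w i - v i) - (w j - v j)) ≤ e * 1 :=
          mul_le_mul_of_nonneg_left (by linarith [(hvw i).2, (hvw j).1]) he.le
        simp only [c]; linarith
  rw [hpre, hpre, measureReal_def, measureReal_def]
  simpa [ENNReal.toReal_mul, (Real.exp_pos e).le] using ENNReal.toReal_mono (by finiteness) hμ

theorem integral_comp_eq_sum_measureReal {Ω ι : Type*} [MeasurableSpace Ω] {μ : Measure Ω}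
    [IsFiniteMeasure μ] [Fintype ι] [MeasurableSpace ι] [MeasurableSingletonClass ι]
    {X : Ω → ι} (hX : Measurable X) (f : ι → ℝ) :
    ∫ ω, f (X ω) ∂μ = ∑ i, μ.real (X ⁻¹' {i}) * f i := by
  rw [← integral_map hX.aemeasurable (.of_discrete), integral_fintype (.of_finite)]
  simp [map_measureReal_apply hX (measurableSet_singleton _)]

theorem integral_comp_le_mul_integral_comp {Ω ι : Type*} [MeasurableSpace Ω] {μ : Measure Ω}
    [IsFiniteMeasure μ] [Fintype ι] [MeasurableSpace ι] [MeasurableSingletonClass ι]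
    {X Y : Ω → ι} (hX : Measurable X) (hY : Measurable Y) {f : ι → ℝ} (hf : ∀ i, 0 ≤ f i)
    {C : ℝ} (hXY : ∀ i, μ.real (X ⁻¹' {i}) ≤ C * μ.real (Y ⁻¹' {i})) :
    ∫ ω, f (X ω) ∂μ ≤ C * ∫ ω, f (Y ω) ∂μ := by
  rw [integral_comp_eq_sum_measureReal hX, integral_comp_eq_sum_measureReal hY, Finset.mul_sum]
  refine Finset.sum_le_sum fun i _ => ?_
  rw [← mul_assoc]
  exact mul_le_mul_of_nonneg_right (hXY i) (hf i)

theorem sum_Icc_sub_sum_Icc_pred_mem_Icc {ι : Type*} {s : ℕ → ι → ℝ}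
    (hs : ∀ t i, s t i ∈ Icc (0 : ℝ) 1) (t : ℕ) (i : ι) :
    (∑ u ∈ Finset.Icc 1 t, s u) i - (∑ u ∈ Finset.Icc 1 (t - 1), s u) i ∈ Icc (0 : ℝ) 1 := by
  cases t with
  | zero => simp
  | succ m => simpa [Finset.sum_Icc_succ_top] using hs (m + 1) i

theorem sub_le_mul_of_le_exp_mul {ℓ r e : ℝ} (hℓ : 0 ≤ ℓ) (h : ℓ ≤ Real.exp e * r) :
    ℓ - r ≤ e * ℓ := by
  have hr : Real.exp (-e) * ℓ ≤ r := by
    rwa [Real.exp_neg, inv_mul_le_iff₀ (Real.exp_pos e)]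
  have : (1 - e) * ℓ ≤ Real.exp (-e) * ℓ :=
    mul_le_mul_of_nonneg_right (by linarith [Real.add_one_le_exp (-e)]) hℓ
  linarith

theorem fpl_bounded_by_ifpl_general {Ω : Type*} [MeasurableSpace Ω] (μ : Measure Ω)
    [IsProbabilityMeasure μ] (n : ℕ) (T : ℕ)
    (q : Fin n → Ω → ℝ) (hmeas : ∀ i, Measurable (q i))
    (hindep : ProbabilityTheory.iIndepFun q μ)
    (htail : ∀ i, ∀ a : ℝ, 0 ≤ a → μ {ω | a ≤ q i ω} = ENNReal.ofReal (Real.exp (-a)))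
    (s : ℕ → Fin n → ℝ) (hs : ∀ t i, s t i ∈ Set.Icc (0 : ℝ) 1)
    (k : Fin n → ℝ) (ε : ℕ → ℝ) (hε : ∀ t, 0 < ε t)
    -- FPL decision I t minimizes s_{<t} + (k - q)/ε_t,
    -- IFPL decision J t minimizes s_{1:t} + (k - q)/ε_t
    (I J : ℕ → Ω → Fin n)
    (hImeas : ∀ t, Measurable (I t)) (hJmeas : ∀ t, Measurable (J t))
    (hIuniq : ∀ t, ∀ᵐ ω ∂μ, ∀ i, i ≠ I t ω →
      (∑ u ∈ Finset.Icc 1 (t - 1), s u) (I t ω) + (k (I t ω) - q (I t ω) ω) / ε t <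
        (∑ u ∈ Finset.Icc 1 (t - 1), s u) i + (k i - q i ω) / ε t)
    (hJuniq : ∀ t, ∀ᵐ ω ∂μ, ∀ i, i ≠ J t ω →
      (∑ u ∈ Finset.Icc 1 t, s u) (J t ω) + (k (J t ω) - q (J t ω) ω) / ε t <
        (∑ u ∈ Finset.Icc 1 t, s u) i + (k i - q i ω) / ε t)
    -- expected FPL and IFPL losses
    (ℓ r : ℕ → ℝ)
    (hℓ : ∀ t, ℓ t = ∫ ω, s t (I t ω) ∂μ)
    (hr : ∀ t, r t = ∫ ω, s t (J t ω) ∂μ) :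
    (∀ t, ℓ t ≤ Real.exp (ε t) * r t) ∧
      ∑ t ∈ Finset.Icc 1 T, ℓ t - ∑ t ∈ Finset.Icc 1 T, r t ≤
        ∑ t ∈ Finset.Icc 1 T, ε t * ℓ t := by
  have hleader (t : ℕ) (i : Fin n) :
      μ.real (I t ⁻¹' {i}) ≤ Real.exp (ε t) * μ.real (J t ⁻¹' {i}) := by
    let score (v : Fin n → ℝ) (ω : Ω) (j : Fin n) : ℝ := v j + (k j - q j ω) / ε t
    rw [measureReal_congr (preimage_singleton_ae_eq_of_ae_strict_argmin (score _) (hIuniq t) i),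
      measureReal_congr (preimage_singleton_ae_eq_of_ae_strict_argmin (score _) (hJuniq t) i)]
    exact measureReal_strictLeader_le_exp_mul hmeas hindep (htail i) (hε t) k
      (sum_Icc_sub_sum_Icc_pred_mem_Icc hs t)
  have hfpl (t : ℕ) : ℓ t ≤ Real.exp (ε t) * r t := by
    rw [hℓ, hr]
    exact integral_comp_le_mul_integral_comp (hImeas t) (hJmeas t) (fun i => (hs t i).1)
      (hleader t)
  refine ⟨hfpl, ?_⟩
  rw [← Finset.sum_sub_distrib]
  refine Finset.sum_le_sum fun t _ => sub_le_mul_of_le_exp_mul ?_ (hfpl t)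
  rw [hℓ]
  exact integral_nonneg fun ω => (hs t _).1

/-- FPL bounded by IFPL: ℓ_t ≤ e^{ε_t} r_t, hence ℓ_{1:T} - r_{1:T} ≤ Σ_t ε_t ℓ_t. -/
theorem fpl_bounded_by_ifpl {Ω : Type*} [MeasurableSpace Ω] (μ : Measure Ω)
    [IsProbabilityMeasure μ] (n : ℕ) (hn : 1 ≤ n) (T : ℕ)
    (q : Fin n → Ω → ℝ) (hmeas : ∀ i, Measurable (q i))
    (hindep : ProbabilityTheory.iIndepFun q μ)
    (htail : ∀ i, ∀ a : ℝ, 0 ≤ a → μ {ω | a ≤ q i ω} = ENNReal.ofReal (Real.exp (-a)))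
    (htail' : ∀ i, ∀ a : ℝ, a < 0 → μ {ω | a ≤ q i ω} = 1)
    (s : ℕ → Fin n → ℝ) (hs : ∀ t i, s t i ∈ Set.Icc (0 : ℝ) 1)
    (k : Fin n → ℝ) (ε : ℕ → ℝ) (hε : ∀ t, 0 < ε t)
    -- FPL decision I t minimizes s_{<t} + (k - q)/ε_t,
    -- IFPL decision J t minimizes s_{1:t} + (k - q)/ε_t
    (I J : ℕ → Ω → Fin n)
    (hImeas : ∀ t, Measurable (I t)) (hJmeas : ∀ t, Measurable (J t))
    (hI : ∀ t ω i,
      (∑ u ∈ Finset.Icc 1 (t - 1), s u) (I t ω) + (k (I t ω) - q (I t ω) ω) / ε t ≤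
        (∑ u ∈ Finset.Icc 1 (t - 1), s u) i + (k i - q i ω) / ε t)
    (hJ : ∀ t ω i,
      (∑ u ∈ Finset.Icc 1 t, s u) (J t ω) + (k (J t ω) - q (J t ω) ω) / ε t ≤
        (∑ u ∈ Finset.Icc 1 t, s u) i + (k i - q i ω) / ε t)
    (hIuniq : ∀ t, ∀ᵐ ω ∂μ, ∀ i, i ≠ I t ω →
      (∑ u ∈ Finset.Icc 1 (t - 1), s u) (I t ω) + (k (I t ω) - q (I t ω) ω) / ε t <
        (∑ u ∈ Finset.Icc 1 (t - 1), s u) i + (k i - q i ω) / ε t)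
    (hJuniq : ∀ t, ∀ᵐ ω ∂μ, ∀ i, i ≠ J t ω →
      (∑ u ∈ Finset.Icc 1 t, s u) (J t ω) + (k (J t ω) - q (J t ω) ω) / ε t <
        (∑ u ∈ Finset.Icc 1 t, s u) i + (k i - q i ω) / ε t)
    -- expected FPL and IFPL losses
    (ℓ r : ℕ → ℝ)
    (hℓ : ∀ t, ℓ t = ∫ ω, s t (I t ω) ∂μ)
    (hr : ∀ t, r t = ∫ ω, s t (J t ω) ∂μ) :
    (∀ t, ℓ t ≤ Real.exp (ε t) * r t) ∧
      ∑ t ∈ Finset.Icc 1 T, ℓ t - ∑ t ∈ Finset.Icc 1 T, r t ≤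
        ∑ t ∈ Finset.Icc 1 T, ε t * ℓ t :=
  fpl_bounded_by_ifpl_general μ n T q hmeas hindep htail s hs k ε hε I J hImeas hJmeas hIuniq hJuniq
    ℓ r hℓ hr
end

section
/- Under the same abstract assumptions (ℓ_{1:T} − r_{1:T} ≤ Σ_t ε_t ℓ_t, r_{1:T} ≤ s_{1:T}^i + k^i/ε_T, ℓ_t ≤ 1), if ε_t = √(K/L) with L ≥ ℓ_{1:T} and k^i ≤ K for all i, then ℓ_{1:T} ≤ s_{1:T}^i + 2√(LK) for all i. -/
/-!
With the constant rate ε = √(K/L) the two assumptions chain to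
ℓ_{1:T} ≤ s^i + k^i/ε + ε ℓ_{1:T} ≤ s^i + K/ε + ε L,
and this choice of ε balances the two error terms: each equals √(LK).
-/

namespace Real

theorem div_sqrt_div_add_sqrt_div_mul {K L : ℝ} (hK : 0 < K) (hL : 0 < L) :
    K / √(K / L) + √(K / L) * L = 2 * √(L * K) := by
  rw [sqrt_div' K hL.le, sqrt_mul hL.le]
  field_simp
  rw [sq_sqrt hK.le, sq_sqrt hL.le]
  ring

end Real

theorem fpl_static_uniform_bound_general {ι : Type*} (T : ℕ)
    (ℓ r ε : ℕ → ℝ) (s k : ι → ℝ) (L K : ℝ) (hL : 0 < L) (hK : 0 < K)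
    (hε : ∀ t, ε t = Real.sqrt (K / L))
    (hkK : ∀ i, k i ≤ K)
    (hloss : ∑ t ∈ Finset.Icc 1 T, ℓ t ≤ L)
    (hlr : ∑ t ∈ Finset.Icc 1 T, ℓ t - ∑ t ∈ Finset.Icc 1 T, r t ≤
      ∑ t ∈ Finset.Icc 1 T, ε t * ℓ t)
    (hr : ∀ i, ∑ t ∈ Finset.Icc 1 T, r t ≤ s i + k i / ε T) :
    ∀ i, ∑ t ∈ Finset.Icc 1 T, ℓ t ≤ s i + 2 * Real.sqrt (L * K) := by
  intro i
  set η := √(K / L) with hη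
  have hη_nonneg : 0 ≤ η := Real.sqrt_nonneg _
  have hlr' : ∑ t ∈ Finset.Icc 1 T, ℓ t - ∑ t ∈ Finset.Icc 1 T, r t ≤
      η * ∑ t ∈ Finset.Icc 1 T, ℓ t := by
    simpa only [hε, ← Finset.mul_sum] using hlr
  calc ∑ t ∈ Finset.Icc 1 T, ℓ t
      ≤ ∑ t ∈ Finset.Icc 1 T, r t + η * ∑ t ∈ Finset.Icc 1 T, ℓ t := by linarith
    _ ≤ (s i + k i / η) + η * L :=
        add_le_add (hε T ▸ hr i) (mul_le_mul_of_nonneg_left hloss hη_nonneg)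
    _ ≤ s i + (K / η + η * L) := by
        have := div_le_div_of_nonneg_right (hkK i) hη_nonneg
        linarith
    _ = s i + 2 * √(L * K) := by rw [hη, Real.div_sqrt_div_add_sqrt_div_mul hK hL]

/-- FPL bound for static learning rate ε_t = √(K/L), uniform complexity bound K. -/
theorem fpl_static_uniform_bound {ι : Type*} (T : ℕ) (hT : 1 ≤ T)
    (ℓ r ε : ℕ → ℝ) (s k : ι → ℝ) (L K : ℝ) (hL : 0 < L) (hK : 0 < K)
    (hε : ∀ t, ε t = Real.sqrt (K / L))
    (hℓ : ∀ t, 0 ≤ ℓ t) (hℓ1 : ∀ t, ℓ t ≤ 1)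
    (hk : ∀ i, 0 ≤ k i) (hkK : ∀ i, k i ≤ K)
    (hloss : ∑ t ∈ Finset.Icc 1 T, ℓ t ≤ L)
    (hlr : ∑ t ∈ Finset.Icc 1 T, ℓ t - ∑ t ∈ Finset.Icc 1 T, r t ≤
      ∑ t ∈ Finset.Icc 1 T, ε t * ℓ t)
    (hr : ∀ i, ∑ t ∈ Finset.Icc 1 T, r t ≤ s i + k i / ε T) :
    ∀ i, ∑ t ∈ Finset.Icc 1 T, ℓ t ≤ s i + 2 * Real.sqrt (L * K) :=
  fpl_static_uniform_bound_general T ℓ r ε s k L K hL hK hε hkK hloss hlr hr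
end

section
/- Under the abstract assumptions ℓ_{1:T} ≤ e^{ε}(s_{1:T}^i + k^i/ε) for static ε ≤ 1 (combining FPL≤e^ε·IFPL and IFPL≤BEH), if ε = √(k^i/L) with L ≥ max{s_{1:T}^i, k^i}, then ℓ_{1:T} ≤ s_{1:T}^i + 2√(L k^i) + 3 k^i. -/
/-- FPL bound for static learning rate ε = √(kⁱ/L), knowing only the ratio
complexity/loss of the best expert. -/
theorem fpl_static_ratio_bound (ℓ s k L : ℝ) (hk : 0 < k) (hs : 0 ≤ s)
    (hL : max s k ≤ L) (ε : ℝ) (hε : ε = Real.sqrt (k / L))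
    (hmain : ℓ ≤ Real.exp ε * (s + k / ε)) :
    ℓ ≤ s + 2 * Real.sqrt (L * k) + 3 * k := by
  have hkL : k ≤ L := le_trans (le_max_right s k) hL
  have hsL : s ≤ L := le_trans (le_max_left s k) hL
  have hLpos : 0 < L := lt_of_lt_of_le hk hkL
  have hεpos : 0 < ε := by
    rw [hε]; exact Real.sqrt_pos.mpr (div_pos hk hLpos)
  have hε1 : ε ≤ 1 := by
    rw [hε]
    rw [show (1:ℝ) = Real.sqrt 1 by simp]
    exact Real.sqrt_le_sqrt (by rw [div_le_one hLpos]; exact hkL)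
  have hε2 : ε ^ 2 * L = k := by
    rw [hε, Real.sq_sqrt (le_of_lt (div_pos hk hLpos))]
    field_simp
  set r := Real.sqrt (L * k) with hr
  have hrsq : r ^ 2 = L * k := Real.sq_sqrt (by positivity)
  have hrpos : 0 < r := Real.sqrt_pos.mpr (by positivity)
  have hεL : ε * L = r := by
    have hsq : (ε * L) ^ 2 = L * k := by nlinarith [hε2]
    rw [← Real.sqrt_sq (by positivity : 0 ≤ ε * L), hsq]
  have hkε : k / ε = r := by
    field_simp
    nlinarith [hε2, hεL]
  have hexp : Real.exp ε ≤ 1 + ε + ε ^ 2 := by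
    have h := Real.exp_bound (x := ε) (by rw [abs_of_pos hεpos]; exact hε1) (by norm_num : 0 < 2)
    have h2 := (abs_le.mp h).2
    rw [abs_of_pos hεpos] at h2
    norm_num [Finset.sum_range_succ, Nat.factorial] at h2
    nlinarith [sq_nonneg ε, h2]
  calc ℓ ≤ Real.exp ε * (s + k / ε) := hmain
    _ ≤ (1 + ε + ε ^ 2) * (s + r) := by
        rw [hkε]
        apply mul_le_mul hexp le_rfl (by positivity)
        positivity
    _ ≤ s + 2 * r + 3 * k := by
        have hεr : ε * r = k := by rw [← hεL]; nlinarith [hε2]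
        nlinarith [hε2, hεL, hεr, hεpos, hε1, hsL, hrpos,
          mul_le_mul_of_nonneg_left hsL hεpos.le,
          mul_le_mul_of_nonneg_left (mul_le_mul_of_nonneg_left hsL hεpos.le) hεpos.le,
          mul_le_of_le_one_left hk.le hε1]
end

section
/- Under the abstract assumptions ℓ_t ≤ 1, ℓ_{1:T} − r_{1:T} ≤ Σ_{t=1}^T ε_t, and r_{1:T} ≤ s_{1:T}^i + k^i/ε_T, the choice ε_t = √(K/(2t)) with k^i ≤ K for all i yields ℓ_{1:T} ≤ s_{1:T}^i + 2√(2TK) for all i. -/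
lemma sum_one_div_sqrt_le (T : ℕ) :
    ∑ t ∈ Finset.Icc 1 T, (1 / Real.sqrt t) ≤ 2 * Real.sqrt T := by
  induction T with
  | zero => simp
  | succ n ih =>
    rw [Finset.sum_Icc_succ_top (by omega)]
    have ha : (0:ℝ) ≤ Real.sqrt n := Real.sqrt_nonneg _
    have hb : (0:ℝ) < Real.sqrt (n+1) := Real.sqrt_pos.mpr (by positivity)
    have ha2 : Real.sqrt n ^ 2 = n := Real.sq_sqrt (by positivity)
    have hb2 : Real.sqrt (n+1) ^ 2 = (n:ℝ)+1 := Real.sq_sqrt (by positivity)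
    have key : 1 / Real.sqrt ((n:ℝ)+1) ≤ 2 * (Real.sqrt (n+1) - Real.sqrt n) := by
      rw [div_le_iff₀ hb]
      nlinarith [sq_nonneg (Real.sqrt (n+1) - Real.sqrt n)]
    have : ((n+1 : ℕ) : ℝ) = (n:ℝ)+1 := by push_cast; ring
    rw [this]
    linarith

/-- FPL bound for dynamic learning rate ε_t = √(K/2t). -/
theorem fpl_dynamic_bound {ι : Type*} (T : ℕ) (hT : 1 ≤ T)
    (ℓ r ε : ℕ → ℝ) (s k : ι → ℝ) (K : ℝ) (hK : 0 < K)
    (hε : ∀ t, ε t = Real.sqrt (K / (2 * t)))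
    (hℓ : ∀ t, 0 ≤ ℓ t) (hℓ1 : ∀ t, ℓ t ≤ 1)
    (hk : ∀ i, 0 ≤ k i) (hkK : ∀ i, k i ≤ K)
    (hlr : ∑ t ∈ Finset.Icc 1 T, ℓ t - ∑ t ∈ Finset.Icc 1 T, r t ≤
      ∑ t ∈ Finset.Icc 1 T, ε t)
    (hr : ∀ i, ∑ t ∈ Finset.Icc 1 T, r t ≤ s i + k i / ε T) :
    ∀ i, ∑ t ∈ Finset.Icc 1 T, ℓ t ≤ s i + 2 * Real.sqrt (2 * T * K) := by
  intro i
  have hT' : (0:ℝ) < T := by positivity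
  -- bound on the sum of ε
  have hεsum : ∑ t ∈ Finset.Icc 1 T, ε t ≤ Real.sqrt (2 * T * K) := by
    have h1 : ∀ t ∈ Finset.Icc 1 T, ε t = Real.sqrt (K/2) * (1 / Real.sqrt t) := by
      intro t ht
      have ht1 : (1:ℕ) ≤ t := (Finset.mem_Icc.mp ht).1
      have ht0 : (0:ℝ) < t := by exact_mod_cast ht1
      rw [hε]
      rw [show K / (2 * (t:ℝ)) = (K/2) * (1/t) by field_simp]
      rw [Real.sqrt_mul (by positivity), Real.sqrt_div' 1 (le_of_lt ht0)]
      simp [Real.sqrt_one]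
    rw [Finset.sum_congr rfl h1, ← Finset.mul_sum]
    have h2 := sum_one_div_sqrt_le T
    have h3 : Real.sqrt (K/2) * (2 * Real.sqrt T) = Real.sqrt (2 * T * K) := by
      rw [show (2:ℝ) * T * K = (2*Real.sqrt T)^2 * (K/2) by
        rw [mul_pow, Real.sq_sqrt (le_of_lt hT')]; ring]
      rw [Real.sqrt_mul (by positivity), Real.sqrt_sq (by positivity)]
      ring
    calc Real.sqrt (K/2) * ∑ t ∈ Finset.Icc 1 T, (1 / Real.sqrt t)
        ≤ Real.sqrt (K/2) * (2 * Real.sqrt T) :=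
          mul_le_mul_of_nonneg_left h2 (Real.sqrt_nonneg _)
      _ = Real.sqrt (2 * T * K) := h3
  -- bound on k i / ε T
  have hεT : ε T = Real.sqrt (K / (2 * T)) := hε T
  have hεTpos : 0 < ε T := by rw [hεT]; positivity
  have hkbound : k i / ε T ≤ Real.sqrt (2 * T * K) := by
    rw [div_le_iff₀ hεTpos, hεT]
    have : Real.sqrt (2 * T * K) * Real.sqrt (K / (2 * T)) = K := by
      rw [← Real.sqrt_mul (by positivity)]
      rw [show 2 * (T:ℝ) * K * (K / (2 * T)) = K^2 by field_simp]
      exact Real.sqrt_sq (le_of_lt hK)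
    rw [this]; exact hkK i
  have h4 := hr i
  linarith
end

section
/- Under assumptions ℓ_t ∈ [0,1], ℓ_{1:T} − r_{1:T} ≤ Σ_t ε_t ℓ_t, r_{1:T} ≤ s_{1:T}^i + k^i/ε_T, and k^i ≤ K for all i, the self-confident choice ε_t = √(K/(2(ℓ_{<t}+1))) yields ℓ_{1:T} ≤ s_{1:T}^i + 2√(2(s_{1:T}^i+1)K) + 8K for all i. -/
/-- Per-step bound: ε_t ℓ_t ≤ √(2K)(√(a+ℓ_t) − √a). -/
lemma fpl_step_aux (a l Kv : ℝ) (ha : 0 ≤ a) (hl0 : 0 ≤ l) (hl1 : l ≤ 1)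
    (hK : 0 < Kv) :
    Real.sqrt (Kv / (2 * (a + 1))) * l ≤
      Real.sqrt (2 * Kv) * (Real.sqrt (a + l) - Real.sqrt a) := by
  rcases eq_or_lt_of_le hl0 with h0 | h0
  · simp [← h0]
  · set sa := Real.sqrt a with hsa'
    set sb := Real.sqrt (a + l) with hsb'
    set s1 := Real.sqrt (a + 1) with hs1'
    have hsa : sa ^ 2 = a := Real.sq_sqrt ha
    have hsb : sb ^ 2 = a + l := Real.sq_sqrt (by linarith)
    have hs1 : s1 ^ 2 = a + 1 := Real.sq_sqrt (by linarith)
    have hab : sa ≤ sb := Real.sqrt_le_sqrt (by linarith)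
    have hb1 : sb ≤ s1 := Real.sqrt_le_sqrt (by linarith)
    have h22 : Real.sqrt 2 * Real.sqrt 2 = 2 := Real.mul_self_sqrt (by norm_num)
    have hs1pos : (0:ℝ) < s1 := Real.sqrt_pos.mpr (by linarith)
    have h2pos : (0:ℝ) < Real.sqrt 2 := Real.sqrt_pos.mpr (by norm_num)
    have hKnn : (0:ℝ) ≤ Real.sqrt Kv := Real.sqrt_nonneg _
    have e1 : Real.sqrt (Kv / (2 * (a + 1))) = Real.sqrt Kv / (Real.sqrt 2 * s1) := by
      rw [Real.sqrt_div hK.le, Real.sqrt_mul (by norm_num : (0:ℝ) ≤ 2)]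
    have e2 : Real.sqrt (2 * Kv) = Real.sqrt 2 * Real.sqrt Kv :=
      Real.sqrt_mul (by norm_num) _
    rw [e1, e2, div_mul_eq_mul_div, div_le_iff₀ (by positivity)]
    have hmain : l ≤ 2 * s1 * (sb - sa) := by
      nlinarith [mul_le_mul_of_nonneg_left
        (show sb + sa ≤ 2 * s1 by nlinarith [Real.sqrt_nonneg a])
        (show (0:ℝ) ≤ sb - sa by linarith)]
    calc Real.sqrt Kv * l ≤ Real.sqrt Kv * (2 * s1 * (sb - sa)) :=
          mul_le_mul_of_nonneg_left hmain hKnn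
      _ = Real.sqrt 2 * Real.sqrt Kv * (sb - sa) * (Real.sqrt 2 * s1) := by
          linear_combination (-(Real.sqrt Kv * s1 * (sb - sa))) * h22

/-- Telescoping sum over Icc 1 T. -/
lemma fpl_telescope_aux (f : ℕ → ℝ) (T : ℕ) :
    ∑ t ∈ Finset.Icc 1 T, (f t - f (t - 1)) = f T - f 0 := by
  induction T with
  | zero => simp
  | succ n ih =>
      rw [Finset.sum_Icc_succ_top (Nat.le_add_left 1 n), ih]
      simp only [Nat.add_sub_cancel]
      ring

/-- Quadratic resolution. -/
lemma fpl_quad_aux (x q r : ℝ) (hx : 0 ≤ x) (hq : 0 ≤ q) (hr : 0 ≤ r)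
    (h : x ^ 2 ≤ r ^ 2 + 2 * q * x) :
    x ^ 2 ≤ r ^ 2 + 2 * q * r + 4 * q ^ 2 := by
  have hxle : x ≤ r + 2 * q := by
    by_contra h'
    push_neg at h'
    have ht : 0 < x - r - 2 * q := by linarith
    nlinarith [mul_pos ht ht, mul_nonneg hq (le_of_lt ht), mul_nonneg hr (le_of_lt ht)]
  nlinarith [mul_le_mul_of_nonneg_left hxle (by linarith : (0:ℝ) ≤ 2 * q)]

/-- FPL bound for the self-confident learning rate ε_t = √(K/(2(ℓ_{<t}+1))). -/
theorem fpl_selfconfident_bound {ι : Type*} (T : ℕ) (hT : 1 ≤ T)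
    (ℓ r ε : ℕ → ℝ) (s k : ι → ℝ) (K : ℝ) (hK : 0 < K)
    (hε : ∀ t, ε t = Real.sqrt (K / (2 * ((∑ u ∈ Finset.Icc 1 (t - 1), ℓ u) + 1))))
    (hℓ : ∀ t, 0 ≤ ℓ t) (hℓ1 : ∀ t, ℓ t ≤ 1)
    (hs : ∀ i, 0 ≤ s i) (hk : ∀ i, 0 ≤ k i) (hkK : ∀ i, k i ≤ K)
    (hlr : ∑ t ∈ Finset.Icc 1 T, ℓ t - ∑ t ∈ Finset.Icc 1 T, r t ≤
      ∑ t ∈ Finset.Icc 1 T, ε t * ℓ t)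
    (hr : ∀ i, ∑ t ∈ Finset.Icc 1 T, r t ≤ s i + k i / ε T) :
    ∀ i, ∑ t ∈ Finset.Icc 1 T, ℓ t ≤
      s i + 2 * Real.sqrt (2 * (s i + 1) * K) + 8 * K := by
  intro i
  have hPsucc : ∀ n : ℕ, (∑ u ∈ Finset.Icc 1 (n + 1), ℓ u)
      = (∑ u ∈ Finset.Icc 1 n, ℓ u) + ℓ (n + 1) :=
    fun n => Finset.sum_Icc_succ_top (Nat.le_add_left 1 n) ℓ
  have hPnn : ∀ n : ℕ, 0 ≤ ∑ u ∈ Finset.Icc 1 n, ℓ u :=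
    fun n => Finset.sum_nonneg fun u _ => hℓ u
  set L := ∑ t ∈ Finset.Icc 1 T, ℓ t with hLdef
  have hL0 : 0 ≤ L := hPnn T
  -- per-step key bound
  have hkey : ∀ t ∈ Finset.Icc 1 T, ε t * ℓ t ≤
      Real.sqrt (2 * K) * (Real.sqrt (∑ u ∈ Finset.Icc 1 t, ℓ u)
        - Real.sqrt (∑ u ∈ Finset.Icc 1 (t - 1), ℓ u)) := by
    intro t ht
    have ht1 : 1 ≤ t := (Finset.mem_Icc.mp ht).1
    obtain ⟨n, rfl⟩ : ∃ n, t = n + 1 := ⟨t - 1, by omega⟩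
    rw [hε (n + 1), hPsucc n]
    simp only [Nat.add_sub_cancel]
    exact fpl_step_aux _ _ _ (hPnn n) (hℓ _) (hℓ1 _) hK
  -- telescoping bound on the sum
  have hsum : ∑ t ∈ Finset.Icc 1 T, ε t * ℓ t ≤ Real.sqrt (2 * K) * Real.sqrt L := by
    calc ∑ t ∈ Finset.Icc 1 T, ε t * ℓ t
        ≤ ∑ t ∈ Finset.Icc 1 T, Real.sqrt (2 * K) *
            (Real.sqrt (∑ u ∈ Finset.Icc 1 t, ℓ u)
              - Real.sqrt (∑ u ∈ Finset.Icc 1 (t - 1), ℓ u)) :=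
          Finset.sum_le_sum hkey
      _ = Real.sqrt (2 * K) * (Real.sqrt (∑ u ∈ Finset.Icc 1 T, ℓ u)
            - Real.sqrt (∑ u ∈ Finset.Icc 1 0, ℓ u)) := by
          rw [← Finset.mul_sum,
            fpl_telescope_aux (fun n => Real.sqrt (∑ u ∈ Finset.Icc 1 n, ℓ u)) T]
      _ = Real.sqrt (2 * K) * Real.sqrt L := by simp [← hLdef]
  -- bound on k i / ε T
  have hc0 : 0 < (∑ u ∈ Finset.Icc 1 (T - 1), ℓ u) + 1 := by
    have := hPnn (T - 1); linarith
  have hPT : (∑ u ∈ Finset.Icc 1 (T - 1), ℓ u) ≤ L :=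
    Finset.sum_le_sum_of_subset_of_nonneg
      (Finset.Icc_subset_Icc_right (by omega)) (fun u _ _ => hℓ u)
  have hεpos : 0 < ε T := by
    rw [hε]
    exact Real.sqrt_pos.mpr (by positivity)
  have hkbound : k i / ε T ≤ Real.sqrt (2 * K) * Real.sqrt (L + 1) := by
    rw [div_le_iff₀ hεpos, hε]
    have e1 : Real.sqrt (2 * K) * Real.sqrt (L + 1) *
        Real.sqrt (K / (2 * ((∑ u ∈ Finset.Icc 1 (T - 1), ℓ u) + 1)))
        = Real.sqrt ((2 * K) * (L + 1) *
            (K / (2 * ((∑ u ∈ Finset.Icc 1 (T - 1), ℓ u) + 1)))) := by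
      rw [← Real.sqrt_mul (show (0:ℝ) ≤ 2 * K by positivity) (L + 1),
        ← Real.sqrt_mul (by positivity)]
    rw [e1]
    have e2 : (2 * K) * (L + 1) *
        (K / (2 * ((∑ u ∈ Finset.Icc 1 (T - 1), ℓ u) + 1)))
        = K ^ 2 * ((L + 1) / ((∑ u ∈ Finset.Icc 1 (T - 1), ℓ u) + 1)) := by
      field_simp
    rw [e2]
    have h3 : K ^ 2 ≤ K ^ 2 * ((L + 1) / ((∑ u ∈ Finset.Icc 1 (T - 1), ℓ u) + 1)) := by
      have h1 : (1:ℝ) ≤ (L + 1) / ((∑ u ∈ Finset.Icc 1 (T - 1), ℓ u) + 1) :=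
        (one_le_div hc0).mpr (by linarith)
      nlinarith [sq_nonneg K]
    calc k i ≤ K := hkK i
      _ = Real.sqrt (K ^ 2) := (Real.sqrt_sq hK.le).symm
      _ ≤ _ := Real.sqrt_le_sqrt h3
  -- combine
  have hmono : Real.sqrt L ≤ Real.sqrt (L + 1) := Real.sqrt_le_sqrt (by linarith)
  have hq0 : (0:ℝ) ≤ Real.sqrt (2 * K) := Real.sqrt_nonneg _
  have hmain : L ≤ s i + 2 * (Real.sqrt (2 * K) * Real.sqrt (L + 1)) := by
    have h1 := hr i
    have h2 := mul_le_mul_of_nonneg_left hmono hq0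
    linarith
  -- quadratic resolution
  have hx2 : (Real.sqrt (L + 1)) ^ 2 = L + 1 := Real.sq_sqrt (by linarith)
  have hq2 : (Real.sqrt (2 * K)) ^ 2 = 2 * K := Real.sq_sqrt (by positivity)
  have hr2 : (Real.sqrt (s i + 1)) ^ 2 = s i + 1 := Real.sq_sqrt (by have := hs i; linarith)
  have hquad := fpl_quad_aux (Real.sqrt (L + 1)) (Real.sqrt (2 * K)) (Real.sqrt (s i + 1))
    (Real.sqrt_nonneg _) hq0 (Real.sqrt_nonneg _)
    (by rw [hx2, hr2]; linarith)
  have hgs : Real.sqrt (2 * (s i + 1) * K) = Real.sqrt (2 * K) * Real.sqrt (s i + 1) := by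
    rw [show 2 * (s i + 1) * K = (2 * K) * (s i + 1) by ring,
      Real.sqrt_mul (by positivity)]
  rw [hgs]
  nlinarith [hquad, hx2, hq2, hr2]
end
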